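/- Let (E¹₊, E¹₋, d¹₊, d¹₋) and (E²₊, E²₋, d²₊, d²₋) be 2-periodic complexes of finite-dimensional k-vector spaces, and suppose E¹ is exact. Then the tensor product 2-periodic complex E¹ ⊗ E² (with Koszul-sign differentials) is exact. -/

import Mathlib

/-!
Over a field an exact 2-periodic complex is contractible: if `C` complements `ker d₊` and `D`
complements `ker d₋`, the generalized inverses of `d₊` and `d₋` adapted to these complements
form a contracting homotopy. Tensoring it with the identity of `E²` gives a contracting
homotopy of `E¹ ⊗ E²`, which is therefore exact.
-/

open TensorProduct LinearMap Submodule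

section Contraction

variable {K V W : Type*} [DivisionRing K] [AddCommGroup V] [Module K V]
  [AddCommGroup W] [Module K W]

theorem LinearMap.exists_generalizedInverse_of_isCompl (f : V →ₗ[K] W) {C : Submodule K V}
    {D : Submodule K W} (hC : IsCompl C (ker f)) (hD : IsCompl (range f) D) :
    ∃ f' : W →ₗ[K] V, f' ∘ₗ f = C.projection (ker f) hC ∧
      f ∘ₗ f' = (range f).projection D hD := by
  obtain ⟨s, hs⟩ := f.rangeRestrict.exists_rightInverse_of_surjective f.range_rangeRestrict
  have hfs (y : range f) : f (s y) = y := congr(($hs y : W))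
  have hfC (x : V) : f (C.projection (ker f) hC x) = f x := by
    rw [eq_comm, ← sub_eq_zero, ← map_sub]
    exact sub_projection_mem hC x
  refine ⟨C.projection (ker f) hC ∘ₗ s ∘ₗ (range f).projectionOnto D hD, ?_, ?_⟩
  · ext x
    simp only [comp_apply, projectionOnto_apply_of_mem_left hD (mem_range_self f x)]
    rw [← sub_eq_zero, ← map_sub]
    apply projection_apply_of_mem_right hC
    rw [mem_ker, map_sub, hfs, sub_self]
  · ext y
    simp [hfC, hfs]

theorem LinearMap.exists_contractingHomotopy_of_ker_eq_range (f : V →ₗ[K] W) (g : W →ₗ[K] V)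
    (hfg : ker f = range g) (hgf : ker g = range f) :
    ∃ (f' : W →ₗ[K] V) (g' : V →ₗ[K] W),
      f' ∘ₗ f + g ∘ₗ g' = LinearMap.id ∧ g' ∘ₗ g + f ∘ₗ f' = LinearMap.id := by
  obtain ⟨C, hC⟩ := (ker f).exists_isCompl
  obtain ⟨D, hD⟩ := (ker g).exists_isCompl
  obtain ⟨f', hf'f, hff'⟩ := f.exists_generalizedInverse_of_isCompl hC.symm (hgf ▸ hD)
  obtain ⟨g', hg'g, hgg'⟩ := g.exists_generalizedInverse_of_isCompl hD.symm (hfg ▸ hC)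
  refine ⟨f', g', ?_, ?_⟩
  · rw [hf'f, hgg']
    convert projection_add_projection_eq_id hC.symm using 3
    exact hfg.symm
  · rw [hg'g, hff']
    convert projection_add_projection_eq_id hD.symm using 3
    exact hgf.symm

theorem LinearMap.ker_eq_range_of_homotopy {R M N : Type*} [Ring R] [AddCommGroup M] [Module R M]
    [AddCommGroup N] [Module R N] {d : M →ₗ[R] N} {d' : N →ₗ[R] M} {h : N →ₗ[R] M}
    {h' : M →ₗ[R] N} (hdd' : d ∘ₗ d' = 0) (hh : h ∘ₗ d + d' ∘ₗ h' = LinearMap.id) :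
    ker d = range d' := by
  refine le_antisymm (fun z hz ↦ ⟨h' z, ?_⟩) (range_le_ker_iff.mpr hdd')
  simpa [mem_ker.mp hz] using congr($hh z)

end Contraction

namespace TwoPeriodic

variable {R A B P Q : Type*} [CommRing R] [AddCommGroup A] [Module R A] [AddCommGroup B]
  [Module R B] [AddCommGroup P] [Module R P] [AddCommGroup Q] [Module R Q]

/-- `D₊ = tensorDiff d¹₊ d¹₋ d²₊ d²₋` and `D₋ = tensorDiff d¹₊ d¹₋ d²₋ d²₊`. -/
def tensorDiff (f : A →ₗ[R] B) (g : B →ₗ[R] A) (φ : P →ₗ[R] Q) (ψ : Q →ₗ[R] P) :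
    (A ⊗[R] P) × (B ⊗[R] Q) →ₗ[R] (A ⊗[R] Q) × (B ⊗[R] P) :=
  (φ.lTensor A ∘ₗ fst R _ _ + g.rTensor Q ∘ₗ snd R _ _).prod
    (f.rTensor P ∘ₗ fst R _ _ - ψ.lTensor B ∘ₗ snd R _ _)

def tensorHomotopy (s : B →ₗ[R] A) (t : A →ₗ[R] B) :
    (A ⊗[R] P) × (B ⊗[R] Q) →ₗ[R] (A ⊗[R] Q) × (B ⊗[R] P) :=
  (s.rTensor Q ∘ₗ snd R _ _).prod (t.rTensor P ∘ₗ fst R _ _)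

variable {f : A →ₗ[R] B} {g : B →ₗ[R] A} {φ : P →ₗ[R] Q} {ψ : Q →ₗ[R] P}

theorem eq_tensorDiff {D : (A ⊗[R] P) × (B ⊗[R] Q) →ₗ[R] (A ⊗[R] Q) × (B ⊗[R] P)}
    (hD : ∀ x y u v, D (x ⊗ₜ y, u ⊗ₜ v) = (x ⊗ₜ φ y + g u ⊗ₜ v, f x ⊗ₜ y - u ⊗ₜ ψ v)) :
    D = tensorDiff f g φ ψ := by
  have hl (x : A) (y : P) : D (x ⊗ₜ y, 0) = (x ⊗ₜ φ y, f x ⊗ₜ y) := by simpa using hD x y 0 0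
  have hr (u : B) (v : Q) : D (0, u ⊗ₜ v) = (g u ⊗ₜ v, -(u ⊗ₜ ψ v)) := by simpa using hD 0 0 u v
  ext <;> simp [tensorDiff, hl, hr]

theorem tensorDiff_comp_tensorDiff (hgf : g ∘ₗ f = 0) (hfg : f ∘ₗ g = 0) (hψφ : ψ ∘ₗ φ = 0)
    (hφψ : φ ∘ₗ ψ = 0) : tensorDiff f g ψ φ ∘ₗ tensorDiff f g φ ψ = 0 := by
  ext <;> simp [tensorDiff, ← comp_apply, hgf, hfg, hψφ, hφψ]

theorem tensorHomotopy_comp_add (s : B →ₗ[R] A) (t : A →ₗ[R] B)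
    (hs : s ∘ₗ f + g ∘ₗ t = LinearMap.id) (ht : t ∘ₗ g + f ∘ₗ s = LinearMap.id) :
    tensorHomotopy s t ∘ₗ tensorDiff f g φ ψ + tensorDiff f g ψ φ ∘ₗ tensorHomotopy s t =
      (LinearMap.id : (A ⊗[R] P) × (B ⊗[R] Q) →ₗ[R] _) := by
  have hs' (x : A) : s (f x) + g (t x) = x := congr($hs x)
  have ht' (u : B) : t (g u) + f (s u) = u := congr($ht u)
  ext <;> simp [tensorDiff, tensorHomotopy, ← add_tmul, hs', ht']

end TwoPeriodic

open TwoPeriodic in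
theorem tensor_with_exact_is_exact_general
    (k : Type*) [Field k]
    (E1p E1m E2p E2m : Type*)
    [AddCommGroup E1p] [Module k E1p]
    [AddCommGroup E1m] [Module k E1m]
    [AddCommGroup E2p] [Module k E2p]
    [AddCommGroup E2m] [Module k E2m]
    (d1p : E1p →ₗ[k] E1m) (d1m : E1m →ₗ[k] E1p)
    (d2p : E2p →ₗ[k] E2m) (d2m : E2m →ₗ[k] E2p)
    (h1mp : d1m ∘ₗ d1p = 0) (h1pm : d1p ∘ₗ d1m = 0)
    (h2mp : d2m ∘ₗ d2p = 0) (h2pm : d2p ∘ₗ d2m = 0)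
    (hex1 : ker d1p = range d1m) (hex2 : ker d1m = range d1p)
    (Dp : (E1p ⊗[k] E2p) × (E1m ⊗[k] E2m) →ₗ[k] (E1p ⊗[k] E2m) × (E1m ⊗[k] E2p))
    (Dm : (E1p ⊗[k] E2m) × (E1m ⊗[k] E2p) →ₗ[k] (E1p ⊗[k] E2p) × (E1m ⊗[k] E2m))
    (hDp : ∀ (x : E1p) (y : E2p) (u : E1m) (v : E2m),
      Dp (x ⊗ₜ y, u ⊗ₜ v) =
        (x ⊗ₜ d2p y + d1m u ⊗ₜ v, d1p x ⊗ₜ y - u ⊗ₜ d2m v))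
    (hDm : ∀ (x : E1p) (y : E2m) (u : E1m) (v : E2p),
      Dm (x ⊗ₜ y, u ⊗ₜ v) =
        (x ⊗ₜ d2m y + d1m u ⊗ₜ v, d1p x ⊗ₜ y - u ⊗ₜ d2p v)) :
    ker Dp = range Dm ∧ ker Dm = range Dp := by
  obtain ⟨s, t, hs, ht⟩ := d1p.exists_contractingHomotopy_of_ker_eq_range d1m hex1 hex2
  obtain rfl := eq_tensorDiff hDp
  obtain rfl := eq_tensorDiff hDm
  exact ⟨ker_eq_range_of_homotopy (tensorDiff_comp_tensorDiff h1mp h1pm h2pm h2mp)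
      (tensorHomotopy_comp_add s t hs ht),
    ker_eq_range_of_homotopy (tensorDiff_comp_tensorDiff h1mp h1pm h2mp h2pm)
      (tensorHomotopy_comp_add s t hs ht)⟩

/-- If `E¹` is an exact 2-periodic complex, then the tensor product 2-periodic
complex `E¹ ⊗ E²` (with Koszul-sign differentials) is exact. -/
theorem tensor_with_exact_is_exact
    (k : Type*) [Field k]
    (E1p E1m E2p E2m : Type*)
    [AddCommGroup E1p] [Module k E1p] [FiniteDimensional k E1p]
    [AddCommGroup E1m] [Module k E1m] [FiniteDimensional k E1m]
    [AddCommGroup E2p] [Module k E2p] [FiniteDimensional k E2p]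
    [AddCommGroup E2m] [Module k E2m] [FiniteDimensional k E2m]
    (d1p : E1p →ₗ[k] E1m) (d1m : E1m →ₗ[k] E1p)
    (d2p : E2p →ₗ[k] E2m) (d2m : E2m →ₗ[k] E2p)
    (h1mp : d1m ∘ₗ d1p = 0) (h1pm : d1p ∘ₗ d1m = 0)
    (h2mp : d2m ∘ₗ d2p = 0) (h2pm : d2p ∘ₗ d2m = 0)
    (hex1 : ker d1p = range d1m) (hex2 : ker d1m = range d1p)
    (Dp : (E1p ⊗[k] E2p) × (E1m ⊗[k] E2m) →ₗ[k] (E1p ⊗[k] E2m) × (E1m ⊗[k] E2p))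
    (Dm : (E1p ⊗[k] E2m) × (E1m ⊗[k] E2p) →ₗ[k] (E1p ⊗[k] E2p) × (E1m ⊗[k] E2m))
    (hDp : ∀ (x : E1p) (y : E2p) (u : E1m) (v : E2m),
      Dp (x ⊗ₜ y, u ⊗ₜ v) =
        (x ⊗ₜ d2p y + d1m u ⊗ₜ v, d1p x ⊗ₜ y - u ⊗ₜ d2m v))
    (hDm : ∀ (x : E1p) (y : E2m) (u : E1m) (v : E2p),
      Dm (x ⊗ₜ y, u ⊗ₜ v) =
        (x ⊗ₜ d2m y + d1m u ⊗ₜ v, d1p x ⊗ₜ y - u ⊗ₜ d2p v)) :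
    ker Dp = range Dm ∧ ker Dm = range Dp :=
  tensor_with_exact_is_exact_general k E1p E1m E2p E2m d1p d1m d2p d2m h1mp h1pm h2mp h2pm hex1 hex2
    Dp Dm hDp hDm
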